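/- The formal power series S(x) = Σ_{r=0}^∞ (x)_{r+1} x^r ∈ ℤ⟦x, q⟦, where (x)_{r+1} = (1 − x)(1 − xq)⋯(1 − x q^r), satisfies the functional equation S(x) = 1 − q x² − q² x³ S(qx), where S(qx) denotes the series obtained from S(x) by substituting qx for x. -/

import Mathlib

open PowerSeries Finset

/-- `ℤ⟦x,q⟧`, realized as `(ℤ⟦q⟧)⟦x⟧`. -/
abbrev Zxq : Type := PowerSeries (PowerSeries ℤ)

/-- The variable `x`. -/
noncomputable def xv : Zxq := PowerSeries.X

/-- The variable `q`. -/
noncomputable def qv : Zxq := PowerSeries.C (R := PowerSeries ℤ) PowerSeries.X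

/-- `(x)_n = ∏_{k=0}^{n-1} (1 - x q^k)`; so `(x)_{r+1} = (1-x)(1-xq)⋯(1-xq^r)`. -/
noncomputable def xPoch (n : ℕ) : Zxq :=
  ∏ k ∈ Finset.range n, (1 - xv * qv ^ k)

/-- `S(x) = Σ_{r=0}^∞ (x)_{r+1} x^r`, defined by its coefficient of `x^a`: the `r`-th
term is divisible by `x^r`, so only terms with `r ≤ a` contribute. -/
noncomputable def zagierS : Zxq :=
  PowerSeries.mk fun a =>
    PowerSeries.coeff (R := PowerSeries ℤ) a (∑ r ∈ Finset.range (a + 1), xPoch (r + 1) * xv ^ r)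

/-!
Write `S_N = ∑_{r<N} (x)_{r+1} x^r` and `S(qx) = rescale q S`. Since `(x)_{n+1} = (1 - x) (qx)_n`,
consecutive terms telescope and an induction on `N` gives
`S_{N+2} = 1 - q x² - q² x³ S_N(qx) - (qx)_{N+1} x^{N+2}`.
As `S ≡ S_N` modulo `x^N`, and substituting `qx` for `x` preserves divisibility by `x^N`, the two
sides of the functional equation agree modulo every power of `x`.
-/

open scoped PowerSeries

lemma eq_zero_of_forall_X_pow_dvd {R : Type*} [Semiring R] {f : R⟦X⟧}
    (h : ∀ N, (X : R⟦X⟧) ^ N ∣ f) : f = 0 := by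
  ext m
  exact X_pow_dvd_iff.mp (h (m + 1)) m (Nat.lt_succ_self m)

lemma X_pow_dvd_rescale {R : Type*} [CommSemiring R] {f : R⟦X⟧} {N : ℕ} (a : R)
    (h : (X : R⟦X⟧) ^ N ∣ f) : (X : R⟦X⟧) ^ N ∣ rescale a f := by
  rw [X_pow_dvd_iff] at h ⊢
  intro m hm
  rw [coeff_rescale, h m hm, mul_zero]

lemma rescale_C {R : Type*} [CommSemiring R] (a r : R) : rescale a (C r) = C r := by
  ext n
  cases n <;> simp [coeff_rescale, coeff_C]

lemma rescale_xv : rescale (X : ℤ⟦X⟧) xv = qv * xv :=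
  rescale_X _

lemma rescale_qv : rescale (X : ℤ⟦X⟧) qv = qv :=
  rescale_C _ _

lemma xPoch_succ (n : ℕ) : xPoch (n + 1) = (1 - xv) * rescale (X : ℤ⟦X⟧) (xPoch n) := by
  simp only [xPoch, prod_range_succ', map_prod, map_sub, map_one, map_mul, map_pow,
    rescale_xv, rescale_qv]
  rw [mul_comm]
  congr 1
  · ring
  · exact prod_congr rfl fun k _ => by ring

lemma rescale_xPoch_succ (n : ℕ) : rescale (X : ℤ⟦X⟧) (xPoch (n + 1)) =
    rescale (X : ℤ⟦X⟧) (xPoch n) * (1 - xv * qv ^ (n + 1)) := by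
  rw [xPoch, prod_range_succ, map_mul, ← xPoch, map_sub, map_one, map_mul, map_pow,
    rescale_xv, rescale_qv]
  ring

noncomputable def zagierSPartial (N : ℕ) : Zxq :=
  ∑ r ∈ range N, xPoch (r + 1) * xv ^ r

lemma zagierSPartial_succ (N : ℕ) :
    zagierSPartial (N + 1) = zagierSPartial N + xPoch (N + 1) * xv ^ N := by
  simp only [zagierSPartial, sum_range_succ]

lemma X_pow_dvd_zagierS_sub_zagierSPartial (N : ℕ) : xv ^ N ∣ zagierS - zagierSPartial N := by
  refine X_pow_dvd_iff.mpr fun m hm => ?_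
  rw [map_sub, zagierS, coeff_mk, zagierSPartial,
    ← sum_range_add_sum_Ico _ (Nat.succ_le_of_lt hm), map_add, sub_add_cancel_left, neg_eq_zero,
    map_sum]
  refine sum_eq_zero fun r hr => ?_
  rw [xv, coeff_mul_X_pow', if_neg (by rw [mem_Ico] at hr; omega)]

lemma zagierSPartial_add_two (N : ℕ) :
    zagierSPartial (N + 2) = 1 - qv * xv ^ 2 - qv ^ 2 * xv ^ 3 *
      rescale (X : ℤ⟦X⟧) (zagierSPartial N) - rescale (X : ℤ⟦X⟧) (xPoch (N + 1)) * xv ^ (N + 2) := by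
  induction N with
  | zero =>
    simp only [zagierSPartial, xPoch, sum_range_succ, prod_range_succ, range_zero, sum_empty,
      prod_empty, map_zero, map_one, map_mul, map_sub, map_pow, rescale_xv, rescale_qv]
    ring
  | succ N ih =>
    rw [zagierSPartial_succ, ih, zagierSPartial_succ, xPoch_succ (N + 2),
      rescale_xPoch_succ (N + 1), map_add, map_mul, map_pow, rescale_xv]
    ring

/-- `S(x) = 1 - q x² - q² x³ S(qx)`, where `S(qx)` is obtained by substituting `qx` for
`x`, i.e. by `rescale q` on `(ℤ⟦q⟧)⟦x⟧` (which multiplies the coefficient of `x^n` by `q^n`). -/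
theorem zagierS_functional_equation :
    zagierS = 1 - qv * xv ^ 2 - qv ^ 2 * xv ^ 3 *
      PowerSeries.rescale (PowerSeries.X : PowerSeries ℤ) zagierS := by
  refine sub_eq_zero.mp (eq_zero_of_forall_X_pow_dvd fun N =>
    (pow_dvd_pow _ (N.le_add_right 2)).trans ?_)
  have hS := X_pow_dvd_zagierS_sub_zagierSPartial
  have hsplit : zagierS - (1 - qv * xv ^ 2 - qv ^ 2 * xv ^ 3 * rescale X zagierS) =
      (zagierS - zagierSPartial (N + 2))
        + qv ^ 2 * (xv ^ 3 * rescale X (zagierS - zagierSPartial N))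
        - rescale X (xPoch (N + 1)) * xv ^ (N + 2) := by
    rw [zagierSPartial_add_two, map_sub]
    ring
  have hrescaled : xv ^ (3 + N) ∣ xv ^ 3 * rescale X (zagierS - zagierSPartial N) := by
    rw [pow_add]
    exact mul_dvd_mul_left _ (X_pow_dvd_rescale _ (hS N))
  rw [hsplit]
  exact dvd_sub (dvd_add (hS _) ((pow_dvd_pow _ (by omega)).trans (hrescaled.mul_left _)))
    (dvd_mul_left _ _)
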